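/- arXiv:1503.05243 — 2 statements merged into one kernel-verified Lean document; each statement's English description precedes it below -/
import Mathlib

section
/- Let (K,|·|) be a normed field, f ∈ K[z] a polynomial of degree n ≥ 2 which splits over K, ξ ∈ Kⁿ a root-vector of f, and 1 ≤ p ≤ ∞ with conjugate exponent q. Suppose the initial guess x⁰ ∈ Kⁿ has pairwise distinct components and satisfies E(x⁰) = ‖(x⁰ − ξ)/d(x⁰)‖_p ≤ n(2^{1/n} − 1)/((n−1)^{1/q} + 2^{1/q}). Then f has only simple zeros in K and the Weierstrass iteration x^{k+1} = x^k − W(x^k) is well defined and converges to ξ, with, for all k ≥ 0 and each index i: |x^{k+1}_i − ξ_i| ≤ θ λ^{2^k} |x^k_i − ξ_i| and |x^k_i − ξ_i| ≤ θ^k λ^{2^k − 1} |x⁰_i − ξ_i|, where λ = β(E(x⁰))/ψ(E(x⁰)), θ = ψ(E(x⁰)), β(t) = (1 + t/(n−1)^{1/p})^{n−1} − 1 and ψ(t) = 1 − 2^{1/q} t (1 + t/(n−1)^{1/p})^{n−1}. -/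
open Finset Filter Topology
open scoped ENNReal

noncomputable def pnorm {n : ℕ} (p : ℝ≥0∞) (v : Fin n → ℝ) : ℝ :=
  if p = ⊤ then ⨆ i, |v i| else (∑ i, |v i| ^ p.toReal) ^ (1 / p.toReal)

noncomputable def epow (a : ℝ) (p : ℝ≥0∞) : ℝ :=
  if p = ⊤ then 1 else a ^ (1 / p.toReal)

noncomputable def dsep {K : Type*} [NormedField K] {n : ℕ} (x : Fin n → K) (i : Fin n) : ℝ :=
  sInf {r : ℝ | ∃ j, j ≠ i ∧ r = ‖x i - x j‖}

noncomputable def Wcorr {K : Type*} [NormedField K] {n : ℕ} (f : Polynomial K)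
    (x : Fin n → K) (i : Fin n) : K :=
  Polynomial.eval (x i) f / (f.leadingCoeff * ∏ j ∈ Finset.univ.erase i, (x i - x j))

def IsRootVector {K : Type*} [NormedField K] {n : ℕ} (f : Polynomial K) (ξ : Fin n → K) : Prop :=
  ∀ z : K, Polynomial.eval z f = f.leadingCoeff * ∏ i, (z - ξ i)

/-!
Write `v = (y - ξ) / d(y)` and `t = ‖v‖_p`. Since `f(yᵢ) = a₀ ∏ⱼ (yᵢ - ξⱼ)`,
`Wᵢ(y) = (yᵢ - ξᵢ) ∏_{j ≠ i} (1 + (yⱼ - ξⱼ) / (yᵢ - yⱼ))`, and each quotient has norm at most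
`vⱼ`. Hölder and AM–GM bound `∏_{j ≠ i} (1 + vⱼ)` by `(1 + t / (n-1)^{1/p})^{n-1}` and
`vᵢ + vⱼ` by `2^{1/q} t`. Hence one Weierstrass step multiplies every error `|yᵢ - ξᵢ|` by at
most `β(t)` and every separation `dᵢ(y)` by at least `ψ(t)`, so `E` drops to at most
`β(t) / ψ(t) · t`. The radius condition on `E(x⁰)` is exactly what makes `β ≤ ψ` (another
AM–GM), and convexity of `β` gives `β(c t) ≤ c β(t)`; an induction then yields
`E(xᵏ) ≤ λ^{2ᵏ-1} E(x⁰)` and the error bounds.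
-/

lemma prod_one_add_le_one_add_mean_pow {ι : Type*} (s : Finset ι) {v : ι → ℝ}
    (hv : ∀ i ∈ s, 0 ≤ v i) :
    ∏ i ∈ s, (1 + v i) ≤ (1 + (∑ i ∈ s, v i) / #s) ^ #s := by
  rcases s.eq_empty_or_nonempty with rfl | hs
  · simp
  have hcard : (0 : ℝ) < #s := by exact_mod_cast hs.card_pos
  have hz : ∀ i ∈ s, 0 ≤ 1 + v i := fun i hi => by linarith [hv i hi]
  have hamgm := Real.geom_mean_le_arith_mean s (fun _ => 1) (fun i => 1 + v i)
    (fun _ _ => zero_le_one) (by simpa using hcard) hz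
  have hmean : (∑ i ∈ s, 1 * (1 + v i)) / #s = 1 + (∑ i ∈ s, v i) / #s := by
    simp only [one_mul, sum_add_distrib, sum_const, nsmul_eq_mul, mul_one]
    field_simp
  simp only [Real.rpow_one, sum_const, nsmul_eq_mul, mul_one, hmean] at hamgm
  calc ∏ i ∈ s, (1 + v i) = ((∏ i ∈ s, (1 + v i)) ^ (#s : ℝ)⁻¹) ^ #s :=
        (Real.rpow_inv_natCast_pow (prod_nonneg hz) hs.card_pos.ne').symm
    _ ≤ _ := pow_le_pow_left₀ (Real.rpow_nonneg (prod_nonneg hz) _) hamgm _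

lemma norm_prod_one_add_sub_one_le_prod {R ι : Type*} [NormedCommRing R] [NormOneClass R]
    (s : Finset ι) (a : ι → R) :
    ‖∏ j ∈ s, (1 + a j) - 1‖ ≤ ∏ j ∈ s, (1 + ‖a j‖) - 1 := by
  classical
  induction s using Finset.induction_on with
  | empty => simp
  | insert k s hk ih =>
    have hprod : ‖∏ j ∈ s, (1 + a j)‖ ≤ ∏ j ∈ s, (1 + ‖a j‖) := by
      linarith [norm_le_norm_sub_add (∏ j ∈ s, (1 + a j)) 1, norm_one (α := R)]
    rw [prod_insert hk, prod_insert hk, show (1 + a k) * ∏ j ∈ s, (1 + a j) - 1 =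
      (∏ j ∈ s, (1 + a j) - 1) + a k * ∏ j ∈ s, (1 + a j) by ring]
    calc _ ≤ ‖∏ j ∈ s, (1 + a j) - 1‖ + ‖a k‖ * ‖∏ j ∈ s, (1 + a j)‖ :=
          norm_add_le_of_le le_rfl (norm_mul_le _ _)
      _ ≤ (∏ j ∈ s, (1 + ‖a j‖) - 1) + ‖a k‖ * ∏ j ∈ s, (1 + ‖a j‖) := by
          gcongr
      _ = _ := by ring

section PNorm

variable {n : ℕ}

lemma epow_nonneg {a : ℝ} (ha : 0 ≤ a) (q : ℝ≥0∞) : 0 ≤ epow a q := by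
  unfold epow
  split_ifs
  · exact zero_le_one
  · positivity

lemma epow_pos {a : ℝ} (ha : 0 < a) (q : ℝ≥0∞) : 0 < epow a q := by
  unfold epow
  split_ifs
  · exact one_pos
  · positivity

lemma pnorm_nonneg (p : ℝ≥0∞) (v : Fin n → ℝ) : 0 ≤ pnorm p v := by
  unfold pnorm
  split_ifs
  · exact Real.iSup_nonneg fun i => abs_nonneg _
  · positivity

lemma pnorm_le_mul_pnorm {p : ℝ≥0∞} (hp : p ≠ 0) {u w : Fin n → ℝ} {c : ℝ}
    (hc : 0 ≤ c) (h : ∀ i, |u i| ≤ c * |w i|) : pnorm p u ≤ c * pnorm p w := by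
  unfold pnorm
  split_ifs with htop
  · refine Real.iSup_le (fun i => (h i).trans ?_)
      (mul_nonneg hc (Real.iSup_nonneg fun i => abs_nonneg _))
    exact mul_le_mul_of_nonneg_left
      (le_ciSup (f := fun j => |w j|) (Set.finite_range _).bddAbove i) hc
  · have hr : 0 < p.toReal := ENNReal.toReal_pos hp htop
    calc (∑ i, |u i| ^ p.toReal) ^ (1 / p.toReal)
        ≤ (c ^ p.toReal * ∑ i, |w i| ^ p.toReal) ^ (1 / p.toReal) := by
          rw [mul_sum]
          gcongr with i
          rw [← Real.mul_rpow hc (abs_nonneg _)]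
          gcongr
          exact h i
      _ = c * (∑ i, |w i| ^ p.toReal) ^ (1 / p.toReal) := by
          rw [Real.mul_rpow (by positivity) (by positivity), one_div,
            Real.rpow_rpow_inv hc hr.ne']

lemma ENNReal.HolderConjugate.cases_toReal (p q : ℝ≥0∞) [p.HolderConjugate q] :
    (p = 1 ∧ q = ⊤) ∨ (p = ⊤ ∧ q = 1) ∨
      (p ≠ ⊤ ∧ q ≠ ⊤ ∧ p.toReal.HolderConjugate q.toReal) := by
  by_cases hp : p = ⊤
  · exact Or.inr (Or.inl ⟨hp, (HolderConjugate.eq_top_iff_eq_one p q).1 hp⟩)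
  by_cases hq : q = ⊤
  · exact Or.inl ⟨(HolderConjugate.eq_top_iff_eq_one q p).1 hq, hq⟩
  refine Or.inr (Or.inr ⟨hp, hq, ?_⟩)
  simpa using HolderTriple.toReal 1 (ENNReal.toReal_pos (HolderConjugate.ne_zero p q) hp)
    (ENNReal.toReal_pos (HolderConjugate.ne_zero q p) hq)

lemma epow_mul_epow {a : ℝ} (ha : 0 ≤ a) (p q : ℝ≥0∞) [p.HolderConjugate q] :
    epow a p * epow a q = a := by
  rcases ENNReal.HolderConjugate.cases_toReal p q with
    ⟨rfl, rfl⟩ | ⟨rfl, rfl⟩ | ⟨hp, hq, hpq⟩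
  · simp [epow]
  · simp [epow]
  simp only [epow, hp, hq, if_false]
  have hsum : 1 / p.toReal + 1 / q.toReal = 1 := by simpa using hpq.one_div_add_one_div
  rw [← Real.rpow_add' ha (by rw [hsum]; exact one_ne_zero), hsum, Real.rpow_one]

lemma sum_le_epow_card_mul_pnorm {p q : ℝ≥0∞} [p.HolderConjugate q] (v : Fin n → ℝ)
    (T : Finset (Fin n)) : ∑ j ∈ T, v j ≤ epow #T q * pnorm p v := by
  rcases ENNReal.HolderConjugate.cases_toReal p q with
    ⟨rfl, rfl⟩ | ⟨rfl, rfl⟩ | ⟨hp, hq, hpq⟩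
  · simp only [epow, pnorm, if_true, one_mul, ENNReal.one_ne_top, if_false, ENNReal.toReal_one,
      Real.rpow_one, div_one]
    calc ∑ j ∈ T, v j ≤ ∑ j ∈ T, |v j| := sum_le_sum fun j _ => le_abs_self _
      _ ≤ ∑ j, |v j| := sum_le_sum_of_subset_of_nonneg (subset_univ T) fun j _ _ => abs_nonneg _
  · simp only [epow, pnorm, if_true, ENNReal.one_ne_top, if_false, ENNReal.toReal_one,
      div_one, Real.rpow_one]
    rw [← nsmul_eq_mul]
    exact sum_le_card_nsmul _ _ _ fun j _ =>
      (le_abs_self _).trans (le_ciSup (f := fun j => |v j|) (Set.finite_range _).bddAbove j)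
  · have hT : (∑ j ∈ T, |(1:ℝ)| ^ q.toReal) ^ (1 / q.toReal) = epow #T q := by
      simp [epow, hq]
    have hsub : (∑ j ∈ T, |v j| ^ p.toReal) ^ (1 / p.toReal) ≤ pnorm p v := by
      simp only [pnorm, hp, if_false]
      exact Real.rpow_le_rpow (by positivity)
        (sum_le_sum_of_subset_of_nonneg (subset_univ T) fun j _ _ => by positivity) (by positivity)
    calc ∑ j ∈ T, v j = ∑ j ∈ T, v j * 1 := by simp
      _ ≤ _ := Real.inner_le_Lp_mul_Lq T v (fun _ => 1) hpq
      _ ≤ pnorm p v * epow #T q := by rw [hT]; gcongr; exact epow_nonneg (Nat.cast_nonneg _) q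
      _ = _ := mul_comm _ _

end PNorm

section Separation

variable {K : Type*} [NormedField K] {n : ℕ}

lemma dsep_nonneg (x : Fin n → K) (i : Fin n) : 0 ≤ dsep x i :=
  Real.sInf_nonneg (by rintro r ⟨j, -, rfl⟩; exact norm_nonneg _)

lemma dsep_le_norm_sub (x : Fin n → K) {i j : Fin n} (hj : j ≠ i) :
    dsep x i ≤ ‖x i - x j‖ :=
  csInf_le ⟨0, by rintro r ⟨j, -, rfl⟩; exact norm_nonneg _⟩ ⟨j, hj, rfl⟩

lemma le_dsep (hn : 2 ≤ n) {x : Fin n → K} {i : Fin n} {c : ℝ}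
    (h : ∀ j, j ≠ i → c ≤ ‖x i - x j‖) : c ≤ dsep x i := by
  have : Nontrivial (Fin n) := Fin.nontrivial_iff_two_le.2 hn
  obtain ⟨j, hj⟩ := exists_ne i
  unfold dsep
  exact le_csInf ⟨_, j, hj, rfl⟩ (by rintro r ⟨j, hj, rfl⟩; exact h j hj)

lemma dsep_pos (hn : 2 ≤ n) {x : Fin n → K} (hx : Function.Injective x) (i : Fin n) :
    0 < dsep x i := by
  have : Nontrivial (Fin n) := Fin.nontrivial_iff_two_le.2 hn
  obtain ⟨j, hj⟩ := exists_ne i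
  have hne : {r : ℝ | ∃ j, j ≠ i ∧ r = ‖x i - x j‖}.Nonempty := ⟨_, j, hj, rfl⟩
  obtain ⟨k, hk, hmin⟩ := hne.csInf_mem <|
    (Set.finite_range fun j => ‖x i - x j‖).subset
      (by rintro r ⟨j, -, rfl⟩; exact ⟨j, rfl⟩)
  rw [dsep, hmin]
  exact norm_pos_iff.2 (sub_ne_zero.2 fun h => hk (hx h).symm)

noncomputable def relErr (ξ y : Fin n → K) (i : Fin n) : ℝ := ‖y i - ξ i‖ / dsep y i

lemma relErr_nonneg (ξ y : Fin n → K) (i : Fin n) : 0 ≤ relErr ξ y i :=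
  div_nonneg (norm_nonneg _) (dsep_nonneg y i)

variable (hn : 2 ≤ n) {y : Fin n → K} (hy : Function.Injective y) (ξ : Fin n → K)
include hn hy

lemma norm_sub_le_relErr_mul {i j : Fin n} (hj : j ≠ i) :
    ‖y i - ξ i‖ ≤ relErr ξ y i * ‖y i - y j‖ := by
  rw [relErr, div_mul_eq_mul_div, le_div_iff₀ (dsep_pos hn hy i)]
  exact mul_le_mul_of_nonneg_left (dsep_le_norm_sub y hj) (norm_nonneg _)

lemma norm_div_sub_le_relErr {i j : Fin n} (hj : j ≠ i) :
    ‖(y j - ξ j) / (y i - y j)‖ ≤ relErr ξ y j := by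
  have hpos : 0 < ‖y i - y j‖ := norm_pos_iff.2 (sub_ne_zero.2 fun h => hj (hy h).symm)
  rw [norm_div, div_le_iff₀ hpos, norm_sub_rev (y i)]
  exact norm_sub_le_relErr_mul hn hy ξ hj.symm

lemma injective_of_relErr_add_lt_one (h : ∀ i j, i ≠ j → relErr ξ y i + relErr ξ y j < 1) :
    Function.Injective ξ := by
  intro a b hab
  by_contra hne
  have hpos : 0 < ‖y a - y b‖ := norm_pos_iff.2 (sub_ne_zero.2 fun h => hne (hy h))
  have : ‖y a - y b‖ ≤ (relErr ξ y a + relErr ξ y b) * ‖y a - y b‖ :=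
    calc ‖y a - y b‖ = ‖(y a - ξ a) - (y b - ξ b)‖ := by
          rw [hab, sub_sub_sub_cancel_right]
      _ ≤ ‖y a - ξ a‖ + ‖y b - ξ b‖ := norm_sub_le _ _
      _ ≤ relErr ξ y a * ‖y a - y b‖ + relErr ξ y b * ‖y b - y a‖ :=
          add_le_add (norm_sub_le_relErr_mul hn hy ξ (Ne.symm hne))
            (norm_sub_le_relErr_mul hn hy ξ hne)
      _ = _ := by rw [norm_sub_rev (y b)]; ring
  nlinarith [h a b hne]

end Separation

section WeierstrassStep

variable {K : Type*} [NormedField K] {n : ℕ}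

noncomputable def weierstrassStep (f : Polynomial K) (y : Fin n → K) : Fin n → K :=
  fun i => y i - Wcorr f y i

variable (hn : 2 ≤ n) {f : Polynomial K} {ξ y : Fin n → K} (hroot : IsRootVector f ξ)
  (ha : f.leadingCoeff ≠ 0) (hy : Function.Injective y)

include hroot ha hy in
lemma Wcorr_eq_mul_prod (i : Fin n) :
    Wcorr f y i = (y i - ξ i) * ∏ j ∈ univ.erase i, (1 + (y j - ξ j) / (y i - y j)) := by
  rw [Wcorr, hroot, ← mul_prod_erase univ _ (mem_univ i), mul_div_mul_left _ _ ha,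
    mul_div_assoc, ← prod_div_distrib]
  congr 1
  refine prod_congr rfl fun j hj => ?_
  have hne : y i - y j ≠ 0 := sub_ne_zero.2 fun h => ne_of_mem_erase hj (hy h).symm
  field_simp
  ring

include hn hy in
lemma norm_prod_sub_one_le_prod_relErr (i : Fin n) :
    ‖∏ j ∈ univ.erase i, (1 + (y j - ξ j) / (y i - y j)) - 1‖ ≤
      ∏ j ∈ univ.erase i, (1 + relErr ξ y j) - 1 := by
  refine (norm_prod_one_add_sub_one_le_prod _ _).trans ?_
  gcongr with j hj
  exact norm_div_sub_le_relErr hn hy ξ (ne_of_mem_erase hj)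

include hn hroot ha hy

lemma norm_weierstrassStep_sub_le (i : Fin n) :
    ‖weierstrassStep f y i - ξ i‖ ≤
      (∏ j ∈ univ.erase i, (1 + relErr ξ y j) - 1) * ‖y i - ξ i‖ := by
  have hstep : weierstrassStep f y i - ξ i =
      -((y i - ξ i) * (∏ j ∈ univ.erase i, (1 + (y j - ξ j) / (y i - y j)) - 1)) := by
    rw [weierstrassStep, Wcorr_eq_mul_prod hroot ha hy]
    ring
  rw [hstep, norm_neg, norm_mul, mul_comm]
  gcongr
  exact norm_prod_sub_one_le_prod_relErr hn hy i

lemma norm_Wcorr_le (i : Fin n) :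
    ‖Wcorr f y i‖ ≤ (∏ j ∈ univ.erase i, (1 + relErr ξ y j)) * ‖y i - ξ i‖ := by
  rw [Wcorr_eq_mul_prod hroot ha hy, norm_mul, mul_comm]
  gcongr
  linarith [norm_le_norm_sub_add (∏ j ∈ univ.erase i, (1 + (y j - ξ j) / (y i - y j))) 1,
    norm_prod_sub_one_le_prod_relErr hn hy (ξ := ξ) i, norm_one (α := K)]

variable {G s : ℝ} (hG : ∀ i, ∏ j ∈ univ.erase i, (1 + relErr ξ y j) ≤ G)
  (hs : ∀ i j, i ≠ j → relErr ξ y i + relErr ξ y j ≤ s)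
include hG hs

lemma mul_norm_sub_le_norm_weierstrassStep_sub {i j : Fin n} (hij : j ≠ i) :
    (1 - s * G) * ‖y i - y j‖ ≤ ‖weierstrassStep f y i - weierstrassStep f y j‖ := by
  have hG0 : 0 ≤ G := (prod_nonneg fun j _ => by linarith [relErr_nonneg ξ y j]).trans (hG i)
  have hW : ∀ {a b : Fin n}, b ≠ a →
      ‖Wcorr f y a‖ ≤ G * (relErr ξ y a * ‖y a - y b‖) :=
    fun hba => (norm_Wcorr_le hn hroot ha hy _).trans
      (mul_le_mul (hG _) (norm_sub_le_relErr_mul hn hy ξ hba) (norm_nonneg _) hG0)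
  have hWi := hW hij
  have hWj := hW hij.symm
  rw [norm_sub_rev (y j)] at hWj
  have htri : ‖y i - y j‖ - (‖Wcorr f y i‖ + ‖Wcorr f y j‖) ≤
      ‖weierstrassStep f y i - weierstrassStep f y j‖ := by
    rw [show weierstrassStep f y i - weierstrassStep f y j =
      (y i - y j) - (Wcorr f y i - Wcorr f y j) by simp only [weierstrassStep]; ring]
    linarith [norm_sub_norm_le (y i - y j) (Wcorr f y i - Wcorr f y j),
      norm_sub_le (Wcorr f y i) (Wcorr f y j)]
  nlinarith [mul_le_mul_of_nonneg_left (hs i j hij.symm) (mul_nonneg hG0 (norm_nonneg (y i - y j)))]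

lemma weierstrassStep_injective (hψ : 0 < 1 - s * G) :
    Function.Injective (weierstrassStep f y) := by
  intro a b hab
  by_contra hne
  have h := mul_norm_sub_le_norm_weierstrassStep_sub hn hroot ha hy hG hs (Ne.symm hne)
  rw [hab, sub_self, norm_zero] at h
  exact h.not_gt (mul_pos hψ (norm_pos_iff.2 (sub_ne_zero.2 fun h => hne (hy h))))

lemma relErr_weierstrassStep_le (hψ : 0 < 1 - s * G) (i : Fin n) :
    relErr ξ (weierstrassStep f y) i ≤ (G - 1) / (1 - s * G) * relErr ξ y i := by
  have hdsep : (1 - s * G) * dsep y i ≤ dsep (weierstrassStep f y) i :=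
    le_dsep hn fun j hj => (mul_le_mul_of_nonneg_left (dsep_le_norm_sub y hj) hψ.le).trans
      (mul_norm_sub_le_norm_weierstrassStep_sub hn hroot ha hy hG hs hj)
  have hG1 : 0 ≤ G - 1 := by
    have := Finset.one_le_prod fun j (_ : j ∈ univ.erase i) =>
      le_add_of_nonneg_right (relErr_nonneg ξ y j)
    linarith [hG i]
  calc relErr ξ (weierstrassStep f y) i
      ≤ ((G - 1) * ‖y i - ξ i‖) / ((1 - s * G) * dsep y i) := by
        refine div_le_div₀ (by positivity)
          ((norm_weierstrassStep_sub_le hn hroot ha hy i).trans ?_)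
          (mul_pos hψ (dsep_pos hn hy i)) hdsep
        gcongr
        linarith [hG i]
    _ = _ := by rw [mul_div_mul_comm]; rfl

end WeierstrassStep

section Factors

variable (n : ℕ) (p q : ℝ≥0∞)

noncomputable def growth (t : ℝ) : ℝ := (1 + t / epow ((n : ℝ) - 1) p) ^ (n - 1)

/-- `errFactor` and `sepFactor` are the paper's `β` and `ψ`. -/
noncomputable def errFactor (t : ℝ) : ℝ := growth n p t - 1

noncomputable def sepFactor (t : ℝ) : ℝ := 1 - epow 2 q * t * growth n p t

noncomputable def convRadius : ℝ :=
  (n : ℝ) * ((2 : ℝ) ^ ((1 : ℝ) / (n : ℝ)) - 1) / (epow ((n : ℝ) - 1) q + epow 2 q)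

variable {n p q} (hn : 2 ≤ n)
include hn

lemma epow_sub_one_pos : 0 < epow ((n : ℝ) - 1) p :=
  epow_pos (by linarith [show (2 : ℝ) ≤ n by exact_mod_cast hn]) p

lemma one_le_growth {t : ℝ} (ht : 0 ≤ t) : 1 ≤ growth n p t :=
  one_le_pow₀ (le_add_of_nonneg_right (div_nonneg ht (epow_sub_one_pos hn).le))

lemma growth_le_growth {s t : ℝ} (hs : 0 ≤ s) (hst : s ≤ t) :
    growth n p s ≤ growth n p t := by
  have := epow_sub_one_pos hn (p := p)
  unfold growth
  gcongr

lemma errFactor_nonneg {t : ℝ} (ht : 0 ≤ t) : 0 ≤ errFactor n p t :=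
  sub_nonneg.2 (one_le_growth hn ht)

lemma errFactor_mul_le {c t : ℝ} (hc0 : 0 ≤ c) (hc1 : c ≤ 1) (ht : 0 ≤ t) :
    errFactor n p (c * t) ≤ c * errFactor n p t := by
  set A := epow ((n : ℝ) - 1) p
  have hA : 0 < A := epow_sub_one_pos hn
  have hconv := (convexOn_pow (n - 1)).2 (Set.mem_Ici.2 (by positivity : (0 : ℝ) ≤ 1 + t / A))
    (Set.mem_Ici.2 zero_le_one) hc0 (sub_nonneg.2 hc1) (add_sub_cancel c 1)
  simp only [smul_eq_mul, one_pow, mul_one] at hconv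
  unfold errFactor growth
  rw [show 1 + c * t / A = c * (1 + t / A) + (1 - c) by ring]
  linarith

lemma errFactor_le_mul {c s t : ℝ} (hc0 : 0 ≤ c) (hc1 : c ≤ 1) (ht : 0 ≤ t) (hs : 0 ≤ s)
    (hst : s ≤ c * t) : errFactor n p s ≤ c * errFactor n p t :=
  (sub_le_sub_right (growth_le_growth hn hs hst) 1).trans (errFactor_mul_le hn hc0 hc1 ht)

lemma sepFactor_le_sepFactor {s t : ℝ} (hs : 0 ≤ s) (hst : s ≤ t) :
    sepFactor n p q t ≤ sepFactor n p q s := by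
  have hB := epow_nonneg zero_le_two q
  have := mul_le_mul (mul_le_mul_of_nonneg_left hst hB) (growth_le_growth hn hs hst (p := p))
    (zero_le_one.trans (one_le_growth hn hs)) (mul_nonneg hB (hs.trans hst))
  unfold sepFactor
  linarith

variable [p.HolderConjugate q] {t : ℝ} (ht0 : 0 ≤ t) (ht : t ≤ convRadius n q)
include ht0 ht

lemma growth_mul_one_add_le_two : growth n p t * (1 + epow 2 q * t) ≤ 2 := by
  obtain ⟨m, rfl⟩ : ∃ m, n = m + 1 := ⟨n - 1, by omega⟩
  have hm : ((m + 1 : ℕ) : ℝ) - 1 = m := by push_cast; ring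
  set A := epow (((m + 1 : ℕ) : ℝ) - 1) p
  set Aq := epow (((m + 1 : ℕ) : ℝ) - 1) q
  set B := epow 2 q
  have hA : 0 < A := epow_sub_one_pos hn
  have hAq : 0 < Aq := epow_sub_one_pos hn
  have hB : 0 < B := epow_pos two_pos q
  have hAAq : A * Aq = m := by
    rw [epow_mul_epow (by rw [hm]; positivity) p q, hm]
  -- AM–GM for `B t` and `n - 1` copies of `t / A`, whose mean is at most `2^{1/n} - 1`
  set w : Fin (m + 1) → ℝ := Fin.cons (B * t) fun _ => t / A
  have hw : ∀ j ∈ univ, 0 ≤ w j := fun j _ => by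
    refine Fin.cases ?_ (fun j => ?_) j <;> simp only [w, Fin.cons_zero, Fin.cons_succ] <;>
      positivity
  have hprod : growth (m + 1) p t * (1 + B * t) = ∏ j, (1 + w j) := by
    rw [growth, Nat.add_sub_cancel]
    simp only [w, Fin.prod_univ_succ, Fin.cons_zero, Fin.cons_succ, prod_const, card_univ,
      Fintype.card_fin]
    ring
  have hsum : (∑ j, w j) / ((m + 1 : ℕ) : ℝ) ≤
      (2 : ℝ) ^ ((1 : ℝ) / ((m + 1 : ℕ) : ℝ)) - 1 := by
    have hsum_eq : ∑ j, w j = (Aq + B) * t := by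
      simp only [w, Fin.sum_univ_succ, Fin.cons_zero, Fin.cons_succ, sum_const, card_univ,
        Fintype.card_fin, nsmul_eq_mul]
      rw [← hAAq]
      field_simp
      ring
    rw [hsum_eq, div_le_iff₀ (by positivity)]
    rw [convRadius, le_div_iff₀ (by positivity)] at ht
    linarith
  rw [hprod]
  calc ∏ j, (1 + w j) ≤ (1 + (∑ j, w j) / ((m + 1 : ℕ) : ℝ)) ^ (m + 1) := by
        simpa using prod_one_add_le_one_add_mean_pow univ hw
    _ ≤ (1 + ((2 : ℝ) ^ ((1 : ℝ) / ((m + 1 : ℕ) : ℝ)) - 1)) ^ (m + 1) := by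
        gcongr
        exact add_nonneg zero_le_one (div_nonneg (sum_nonneg hw) (Nat.cast_nonneg _))
    _ = 2 := by
        rw [add_sub_cancel, one_div, Real.rpow_inv_natCast_pow zero_le_two (Nat.succ_ne_zero m)]

lemma errFactor_le_sepFactor : errFactor n p t ≤ sepFactor n p q t := by
  have := growth_mul_one_add_le_two hn ht0 ht (p := p)
  unfold errFactor sepFactor
  linarith

lemma sepFactor_pos : 0 < sepFactor n p q t := by
  rcases ht0.eq_or_lt with rfl | htpos
  · simp [sepFactor]
  have hgrowth : 1 < growth n p t :=
    one_lt_pow₀ (lt_add_of_pos_right 1 (div_pos htpos (epow_sub_one_pos hn))) (by omega)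
  have := errFactor_le_sepFactor hn ht0 ht (p := p)
  unfold errFactor at this
  linarith

lemma errFactor_lt_one : errFactor n p t < 1 := by
  rcases ht0.eq_or_lt with rfl | htpos
  · simp [errFactor, growth]
  have hpos := mul_pos (mul_pos (epow_pos two_pos q) htpos)
    (zero_lt_one.trans_le (one_le_growth hn ht0 (p := p)))
  have hle := errFactor_le_sepFactor hn ht0 ht (p := p)
  unfold sepFactor at hle
  linarith

lemma errFactor_div_sepFactor_nonneg : 0 ≤ errFactor n p t / sepFactor n p q t :=
  div_nonneg (errFactor_nonneg hn ht0) (sepFactor_pos hn ht0 ht).le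

lemma errFactor_div_sepFactor_le_one : errFactor n p t / sepFactor n p q t ≤ 1 :=
  div_le_one_of_le₀ (errFactor_le_sepFactor hn ht0 ht) (sepFactor_pos hn ht0 ht).le

lemma errFactor_div_sepFactor_le {c s : ℝ} (hc0 : 0 ≤ c) (hc1 : c ≤ 1) (hs : 0 ≤ s)
    (hst : s ≤ c * t) :
    errFactor n p s / sepFactor n p q s ≤ c * (errFactor n p t / sepFactor n p q t) := by
  have hψ := sepFactor_pos hn ht0 ht (p := p)
  rw [← mul_div_assoc]
  exact div_le_div₀ (mul_nonneg hc0 (errFactor_nonneg hn ht0))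
    (errFactor_le_mul hn hc0 hc1 ht0 hs hst) hψ
    (sepFactor_le_sepFactor hn hs (hst.trans (mul_le_of_le_one_left ht0 hc1)))

end Factors

lemma pow_two_pow_succ_sub_one {M : Type*} [Monoid M] (a : M) (k : ℕ) :
    a ^ (2 ^ (k + 1) - 1) = a ^ 2 ^ k * a ^ (2 ^ k - 1) := by
  rw [← pow_add]
  congr 1
  have := Nat.one_le_two_pow (n := k)
  rw [pow_succ]
  omega

lemma le_pow_mul_pow_two_pow_sub_one_mul {a : ℕ → ℝ} {θ r : ℝ} (hθ : 0 ≤ θ)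
    (hr : 0 ≤ r) (h : ∀ k, a (k + 1) ≤ θ * r ^ 2 ^ k * a k) (k : ℕ) :
    a k ≤ θ ^ k * r ^ (2 ^ k - 1) * a 0 := by
  induction k with
  | zero => simp
  | succ k ih =>
    calc a (k + 1) ≤ θ * r ^ 2 ^ k * a k := h k
      _ ≤ θ * r ^ 2 ^ k * (θ ^ k * r ^ (2 ^ k - 1) * a 0) := by gcongr
      _ = θ ^ (k + 1) * r ^ (2 ^ (k + 1) - 1) * a 0 := by
          rw [pow_two_pow_succ_sub_one]
          ring

section PNormStep

variable {K : Type*} [NormedField K] {n : ℕ} {p q : ℝ≥0∞}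

lemma prod_one_add_le_growth (hn : 2 ≤ n) (hp : 1 ≤ p) {v : Fin n → ℝ} (hv : 0 ≤ v)
    (i : Fin n) : ∏ j ∈ univ.erase i, (1 + v j) ≤ growth n p (pnorm p v) := by
  have := ENNReal.HolderConjugate.conjExponent hp
  have hn1 : (0 : ℝ) < n - 1 := by linarith [show (2 : ℝ) ≤ n by exact_mod_cast hn]
  have hcard : #(univ.erase i) = n - 1 := by
    rw [card_erase_of_mem (mem_univ i), card_univ, Fintype.card_fin]
  have hm : ((n - 1 : ℕ) : ℝ) = (n : ℝ) - 1 := by rw [Nat.cast_sub (by omega), Nat.cast_one]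
  have hsum := sum_le_epow_card_mul_pnorm (p := p) (q := ENNReal.conjExponent p) v (univ.erase i)
  rw [hcard, hm] at hsum
  have hmean :
      (∑ j ∈ univ.erase i, v j) / #(univ.erase i) ≤ pnorm p v / epow ((n : ℝ) - 1) p := by
    rw [hcard, hm, div_le_div_iff₀ hn1 (epow_sub_one_pos hn)]
    calc (∑ j ∈ univ.erase i, v j) * epow ((n : ℝ) - 1) p
        ≤ epow ((n : ℝ) - 1) (ENNReal.conjExponent p) * pnorm p v * epow ((n : ℝ) - 1) p := by
          gcongr
          exact epow_nonneg hn1.le p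
      _ = pnorm p v * ((n : ℝ) - 1) := by
          linear_combination pnorm p v * epow_mul_epow hn1.le p (ENNReal.conjExponent p)
  calc ∏ j ∈ univ.erase i, (1 + v j)
      ≤ (1 + (∑ j ∈ univ.erase i, v j) / #(univ.erase i)) ^ #(univ.erase i) :=
        prod_one_add_le_one_add_mean_pow _ fun j _ => hv j
    _ ≤ growth n p (pnorm p v) := by
        rw [growth, ← hcard]
        exact pow_le_pow_left₀ (add_nonneg zero_le_one
          (div_nonneg (sum_nonneg fun j _ => hv j) (Nat.cast_nonneg _))) (by linarith) _

lemma add_le_epow_two_mul_pnorm [p.HolderConjugate q] (v : Fin n → ℝ) {i j : Fin n}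
    (hij : i ≠ j) :
    v i + v j ≤ epow 2 q * pnorm p v := by
  simpa [sum_pair hij, card_pair hij] using sum_le_epow_card_mul_pnorm (p := p) (q := q) v {i, j}

variable (hn : 2 ≤ n) {f : Polynomial K} {ξ y : Fin n → K} (hroot : IsRootVector f ξ)
  (ha : f.leadingCoeff ≠ 0) (hy : Function.Injective y)
include hn hroot ha hy

lemma norm_weierstrassStep_sub_le_errFactor (hp : 1 ≤ p) (i : Fin n) :
    ‖weierstrassStep f y i - ξ i‖ ≤
      errFactor n p (pnorm p (relErr ξ y)) * ‖y i - ξ i‖ :=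
  (norm_weierstrassStep_sub_le hn hroot ha hy i).trans <| mul_le_mul_of_nonneg_right
    (sub_le_sub_right (prod_one_add_le_growth hn hp (relErr_nonneg ξ y) i) 1) (norm_nonneg _)

variable [p.HolderConjugate q] (hψ : 0 < sepFactor n p q (pnorm p (relErr ξ y)))
include hψ

lemma weierstrassStep_injective_of_sepFactor_pos : Function.Injective (weierstrassStep f y) :=
  weierstrassStep_injective hn hroot ha hy
    (prod_one_add_le_growth hn (ENNReal.HolderConjugate.one_le p q) (relErr_nonneg ξ y))
    (fun _ _ => add_le_epow_two_mul_pnorm (relErr ξ y)) hψ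

lemma pnorm_relErr_weierstrassStep_le :
    pnorm p (relErr ξ (weierstrassStep f y)) ≤
      errFactor n p (pnorm p (relErr ξ y)) / sepFactor n p q (pnorm p (relErr ξ y)) *
        pnorm p (relErr ξ y) := by
  refine pnorm_le_mul_pnorm (ENNReal.HolderConjugate.ne_zero p q)
    (div_nonneg (errFactor_nonneg hn (pnorm_nonneg _ _)) hψ.le) fun i => ?_
  rw [abs_of_nonneg (relErr_nonneg _ _ i), abs_of_nonneg (relErr_nonneg _ _ i)]
  exact relErr_weierstrassStep_le hn hroot ha hy
    (prod_one_add_le_growth hn (ENNReal.HolderConjugate.one_le p q) (relErr_nonneg ξ y))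
    (fun _ _ => add_le_epow_two_mul_pnorm (relErr ξ y)) hψ i

end PNormStep

section Iteration

variable {K : Type*} [NormedField K] {n : ℕ} {p q : ℝ≥0∞} [p.HolderConjugate q]
  (hn : 2 ≤ n) {f : Polynomial K} {ξ : Fin n → K} {x : ℕ → Fin n → K} {t₀ : ℝ}
  (ht₀ : pnorm p (relErr ξ (x 0)) ≤ t₀) (ht₀R : t₀ ≤ convRadius n q)
  (hx0 : Function.Injective (x 0))

include hn ht₀ ht₀R hx0 in
lemma injective_of_pnorm_relErr_le_convRadius : Function.Injective ξ := by
  have ht0 : 0 ≤ t₀ := (pnorm_nonneg _ _).trans ht₀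
  have hψ := sepFactor_pos hn ht0 ht₀R (p := p)
  have hB := epow_nonneg zero_le_two q
  have hBt : epow 2 q * t₀ < 1 := by
    have := mul_le_mul_of_nonneg_left (one_le_growth hn ht0 (p := p)) (mul_nonneg hB ht0)
    unfold sepFactor at hψ
    linarith
  refine injective_of_relErr_add_lt_one hn hx0 ξ fun i j hij => ?_
  calc relErr ξ (x 0) i + relErr ξ (x 0) j ≤ epow 2 q * pnorm p (relErr ξ (x 0)) :=
        add_le_epow_two_mul_pnorm _ hij
    _ ≤ epow 2 q * t₀ := mul_le_mul_of_nonneg_left ht₀ hB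
    _ < 1 := hBt

variable (hroot : IsRootVector f ξ) (ha : f.leadingCoeff ≠ 0)
  (hiter : ∀ k, x (k + 1) = weierstrassStep f (x k))
include hn ht₀ ht₀R hx0 hroot ha hiter

lemma injective_iterate_and_pnorm_relErr_le (k : ℕ) :
    Function.Injective (x k) ∧
      pnorm p (relErr ξ (x k)) ≤
        (errFactor n p t₀ / sepFactor n p q t₀) ^ (2 ^ k - 1) * t₀ := by
  have ht0 : 0 ≤ t₀ := (pnorm_nonneg _ _).trans ht₀
  set r := errFactor n p t₀ / sepFactor n p q t₀
  have hr0 : 0 ≤ r := errFactor_div_sepFactor_nonneg hn ht0 ht₀R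
  have hr1 : r ≤ 1 := errFactor_div_sepFactor_le_one hn ht0 ht₀R
  induction k with
  | zero => simpa using ⟨hx0, ht₀⟩
  | succ k ih =>
    obtain ⟨hinj, hEk⟩ := ih
    have hc0 : 0 ≤ r ^ (2 ^ k - 1) := pow_nonneg hr0 _
    have hc1 : r ^ (2 ^ k - 1) ≤ 1 := pow_le_one₀ hr0 hr1
    have hE0 : 0 ≤ pnorm p (relErr ξ (x k)) := pnorm_nonneg _ _
    have hψ := sepFactor_pos hn hE0 (hEk.trans ((mul_le_of_le_one_left ht0 hc1).trans ht₀R))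
      (p := p)
    rw [hiter k]
    refine ⟨weierstrassStep_injective_of_sepFactor_pos hn hroot ha hinj hψ,
      (pnorm_relErr_weierstrassStep_le hn hroot ha hinj hψ).trans ?_⟩
    calc _ ≤ (r ^ (2 ^ k - 1) * r) * (r ^ (2 ^ k - 1) * t₀) :=
          mul_le_mul (errFactor_div_sepFactor_le hn ht0 ht₀R hc0 hc1 hE0 hEk) hEk hE0
            (by positivity)
      _ = r ^ (2 ^ (k + 1) - 1) * t₀ := by
          rw [pow_two_pow_succ_sub_one, pow_sub_one_mul (by positivity) r]
          ring

lemma norm_iterate_succ_sub_le (k : ℕ) (i : Fin n) :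
    ‖x (k + 1) i - ξ i‖ ≤
      sepFactor n p q t₀ * (errFactor n p t₀ / sepFactor n p q t₀) ^ 2 ^ k *
        ‖x k i - ξ i‖ := by
  obtain ⟨hinj, hEk⟩ :=
    injective_iterate_and_pnorm_relErr_le hn ht₀ ht₀R hx0 hroot ha hiter k
  have ht0 : 0 ≤ t₀ := (pnorm_nonneg _ _).trans ht₀
  have hψ := sepFactor_pos hn ht0 ht₀R (p := p)
  set r := errFactor n p t₀ / sepFactor n p q t₀
  have hr0 : 0 ≤ r := errFactor_div_sepFactor_nonneg hn ht0 ht₀R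
  have hr1 : r ≤ 1 := errFactor_div_sepFactor_le_one hn ht0 ht₀R
  rw [hiter k]
  refine (norm_weierstrassStep_sub_le_errFactor hn hroot ha hinj
    (ENNReal.HolderConjugate.one_le p q) i).trans (mul_le_mul_of_nonneg_right ?_ (norm_nonneg _))
  calc errFactor n p (pnorm p (relErr ξ (x k))) ≤ r ^ (2 ^ k - 1) * errFactor n p t₀ :=
        errFactor_le_mul hn (pow_nonneg hr0 _) (pow_le_one₀ hr0 hr1) ht0 (pnorm_nonneg _ _) hEk
    _ = sepFactor n p q t₀ * r ^ 2 ^ k := by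
        rw [← mul_div_cancel₀ (errFactor n p t₀) hψ.ne',
          ← pow_sub_one_mul (pow_ne_zero k two_ne_zero) r]
        ring

lemma norm_iterate_sub_le (k : ℕ) (i : Fin n) :
    ‖x k i - ξ i‖ ≤
      sepFactor n p q t₀ ^ k * (errFactor n p t₀ / sepFactor n p q t₀) ^ (2 ^ k - 1) *
        ‖x 0 i - ξ i‖ := by
  have ht0 : 0 ≤ t₀ := (pnorm_nonneg _ _).trans ht₀
  exact le_pow_mul_pow_two_pow_sub_one_mul (a := fun k => ‖x k i - ξ i‖)
    (sepFactor_pos hn ht0 ht₀R (p := p)).le (errFactor_div_sepFactor_nonneg hn ht0 ht₀R)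
    (fun k => norm_iterate_succ_sub_le hn ht₀ ht₀R hx0 hroot ha hiter k i) k

lemma tendsto_iterate (i : Fin n) : Tendsto (fun k => x k i) atTop (𝓝 (ξ i)) := by
  have ht0 : 0 ≤ t₀ := (pnorm_nonneg _ _).trans ht₀
  have hψ := sepFactor_pos hn ht0 ht₀R (p := p)
  have hr0 := errFactor_div_sepFactor_nonneg hn ht0 ht₀R (p := p)
  have hr1 := errFactor_div_sepFactor_le_one hn ht0 ht₀R (p := p)
  have hbound : ∀ k, ‖x k i - ξ i‖ ≤ errFactor n p t₀ ^ k * ‖x 0 i - ξ i‖ := by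
    intro k
    have hk : k ≤ 2 ^ k - 1 := by have := Nat.lt_two_pow_self (n := k); omega
    calc _ ≤ _ := norm_iterate_sub_le hn ht₀ ht₀R hx0 hroot ha hiter k i
      _ ≤ sepFactor n p q t₀ ^ k * (errFactor n p t₀ / sepFactor n p q t₀) ^ k *
            ‖x 0 i - ξ i‖ :=
          mul_le_mul_of_nonneg_right (mul_le_mul_of_nonneg_left
            (pow_le_pow_of_le_one hr0 hr1 hk) (pow_nonneg hψ.le k)) (norm_nonneg _)
      _ = _ := by rw [← mul_pow, mul_div_cancel₀ _ hψ.ne']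
  rw [tendsto_iff_norm_sub_tendsto_zero]
  refine squeeze_zero (fun _ => norm_nonneg _) hbound ?_
  simpa using (tendsto_pow_atTop_nhds_zero_of_lt_one (errFactor_nonneg hn ht0)
    (errFactor_lt_one hn ht0 ht₀R (q := q))).mul_const ‖x 0 i - ξ i‖

end Iteration

theorem weierstrass_local_convergence_han_general
    {K : Type*} [NormedField K] {n : ℕ} (hn : 2 ≤ n)
    (f : Polynomial K) (hdeg : f.natDegree = n)
    (ξ : Fin n → K) (hroot : IsRootVector f ξ)
    (p q : ℝ≥0∞) (hpq : 1 / p + 1 / q = 1)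
    (E : (Fin n → K) → ℝ)
    (hE : ∀ y : Fin n → K, E y = pnorm p (fun i => ‖y i - ξ i‖ / dsep y i))
    (ψ β : ℝ → ℝ)
    (hψ : ∀ t : ℝ, ψ t = 1 - epow 2 q * t * (1 + t / epow ((n : ℝ) - 1) p) ^ (n - 1))
    (hβ : ∀ t : ℝ, β t = (1 + t / epow ((n : ℝ) - 1) p) ^ (n - 1) - 1)
    (x : ℕ → Fin n → K) (hx0 : Function.Injective (x 0))
    (hinit : E (x 0) ≤
      (n : ℝ) * ((2:ℝ) ^ ((1:ℝ) / (n : ℝ)) - 1) / (epow ((n : ℝ) - 1) q + epow 2 q))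
    (hiter : ∀ k : ℕ, x (k+1) = fun i => x k i - Wcorr f (x k) i) :
    Function.Injective ξ ∧
    (∀ k : ℕ, Function.Injective (x k)) ∧
    (∀ i : Fin n, Filter.Tendsto (fun k => x k i) Filter.atTop (nhds (ξ i))) ∧
    (∀ k : ℕ, ∀ i : Fin n,
      ‖x (k+1) i - ξ i‖ ≤ ψ (E (x 0)) * (β (E (x 0)) / ψ (E (x 0))) ^ 2 ^ k * ‖x k i - ξ i‖) ∧
    (∀ k : ℕ, ∀ i : Fin n,
      ‖x k i - ξ i‖ ≤ ψ (E (x 0)) ^ k * (β (E (x 0)) / ψ (E (x 0))) ^ (2 ^ k - 1) *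
        ‖x 0 i - ξ i‖) := by
  have : p.HolderConjugate q := ENNReal.holderConjugate_iff.2 (by simpa only [one_div] using hpq)
  obtain rfl : E = fun y => pnorm p (relErr ξ y) := funext hE
  obtain rfl : ψ = sepFactor n p q := funext hψ
  obtain rfl : β = errFactor n p := funext hβ
  have ha : f.leadingCoeff ≠ 0 :=
    Polynomial.leadingCoeff_ne_zero.2 fun hf => by simp [hf] at hdeg; omega
  exact ⟨injective_of_pnorm_relErr_le_convRadius hn le_rfl hinit hx0,
    fun k => (injective_iterate_and_pnorm_relErr_le hn le_rfl hinit hx0 hroot ha hiter k).1,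
    tendsto_iterate hn le_rfl hinit hx0 hroot ha hiter,
    norm_iterate_succ_sub_le hn le_rfl hinit hx0 hroot ha hiter,
    norm_iterate_sub_le hn le_rfl hinit hx0 hroot ha hiter⟩

/-- If `x⁰` has pairwise distinct components and
`E(x⁰) = ‖(x⁰−ξ)/d(x⁰)‖_p ≤ n(2^{1/n} − 1)/((n−1)^{1/q} + 2^{1/q})`, then `f` has only
simple zeros and the Weierstrass iteration converges to `ξ` with the second-kind
error estimates. -/
theorem weierstrass_local_convergence_han
    {K : Type*} [NormedField K] {n : ℕ} (hn : 2 ≤ n)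
    (f : Polynomial K) (hdeg : f.natDegree = n)
    (ξ : Fin n → K) (hroot : IsRootVector f ξ)
    (p q : ℝ≥0∞) (hp : 1 ≤ p) (hpq : 1 / p + 1 / q = 1)
    (E : (Fin n → K) → ℝ)
    (hE : ∀ y : Fin n → K, E y = pnorm p (fun i => ‖y i - ξ i‖ / dsep y i))
    (ψ β : ℝ → ℝ)
    (hψ : ∀ t : ℝ, ψ t = 1 - epow 2 q * t * (1 + t / epow ((n : ℝ) - 1) p) ^ (n - 1))
    (hβ : ∀ t : ℝ, β t = (1 + t / epow ((n : ℝ) - 1) p) ^ (n - 1) - 1)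
    (x : ℕ → Fin n → K) (hx0 : Function.Injective (x 0))
    (hinit : E (x 0) ≤
      (n : ℝ) * ((2:ℝ) ^ ((1:ℝ) / (n : ℝ)) - 1) / (epow ((n : ℝ) - 1) q + epow 2 q))
    (hiter : ∀ k : ℕ, x (k+1) = fun i => x k i - Wcorr f (x k) i) :
    Function.Injective ξ ∧
    (∀ k : ℕ, Function.Injective (x k)) ∧
    (∀ i : Fin n, Filter.Tendsto (fun k => x k i) Filter.atTop (nhds (ξ i))) ∧
    (∀ k : ℕ, ∀ i : Fin n,
      ‖x (k+1) i - ξ i‖ ≤ ψ (E (x 0)) * (β (E (x 0)) / ψ (E (x 0))) ^ 2 ^ k * ‖x k i - ξ i‖) ∧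
    (∀ k : ℕ, ∀ i : Fin n,
      ‖x k i - ξ i‖ ≤ ψ (E (x 0)) ^ k * (β (E (x 0)) / ψ (E (x 0))) ^ (2 ^ k - 1) *
        ‖x 0 i - ξ i‖) :=
  weierstrass_local_convergence_han_general hn f hdeg ξ hroot p q hpq E hE ψ β hψ hβ x hx0 hinit
    hiter
end

section
/- Let (K,|·|) be a normed field and f ∈ K[z] a polynomial of degree n ≥ 2. Let (x^k) be a sequence of vectors in Kⁿ, each having pairwise distinct components, such that (x^k) converges to some ξ ∈ Kⁿ (componentwise, i.e. |x^k_i − ξ_i| → 0 for every i) and the Weierstrass corrections converge to zero, i.e. |W_i(x^k)| → 0 for every i. Then ξ is a root-vector of f, i.e. f(z) = a₀ ∏_{i=1}^n (z − ξ_i) for all z ∈ K, where a₀ is the leading coefficient of f. -/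
open Finset Filter Topology
open scoped ENNReal

/-! For pairwise distinct nodes `x`, the polynomial `f - a₀ ∏ (X - x_j)` has degree `< n`, so it
equals its Lagrange interpolant at the nodes, whose coefficients are exactly `a₀ W_i(x)`. Hence
`f(z) = a₀ ∏ (z - x_j) + ∑ a₀ W_i(x) ∏_{j ≠ i} (z - x_j)` for every `z`; along the sequence the sum
tends to `0` and the product to `∏ (z - ξ_j)`. -/

open Polynomial

namespace Lagrange

variable {F ι : Type*} [Field F] [DecidableEq ι]

theorem eval_basis (s : Finset ι) (v : ι → F) (i : ι) (z : F) :
    (Lagrange.basis s v i).eval z = nodalWeight s v i * ∏ j ∈ s.erase i, (z - v j) := by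
  simp only [Lagrange.basis, basisDivisor, nodalWeight, eval_prod, eval_mul, eval_C, eval_sub,
    eval_X, prod_mul_distrib]

theorem eq_C_leadingCoeff_mul_nodal_add_interpolate [Fintype ι] {f : F[X]}
    (hdeg : f.natDegree = Fintype.card ι) {v : ι → F} (hv : Function.Injective v) :
    f = C f.leadingCoeff * nodal univ v + interpolate univ v fun i => f.eval (v i) := by
  rw [← sub_eq_iff_eq_add']
  refine eq_interpolate_of_eval_eq _ hv.injOn ?_ fun i _ => ?_
  · rcases eq_or_ne f 0 with rfl | hf
    · simp
    have hnodal : (C f.leadingCoeff * nodal univ v).degree = f.degree := by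
      rw [degree_C_mul (leadingCoeff_ne_zero.mpr hf), degree_nodal, degree_eq_natDegree hf, hdeg,
        card_univ]
    rw [card_univ, ← hdeg, ← degree_eq_natDegree hf]
    refine degree_sub_lt_left hnodal.symm hf ?_
    rw [leadingCoeff_mul, leadingCoeff_C, nodal_monic.leadingCoeff, mul_one]
  · simp [eval_nodal_at_node]

end Lagrange

theorem wcorr_mul_leadingCoeff {K : Type*} [NormedField K] {n : ℕ} {f : K[X]}
    (hdeg : f.natDegree = n) (x : Fin n → K) (i : Fin n) :
    Wcorr f x i * f.leadingCoeff = f.eval (x i) * Lagrange.nodalWeight univ x i := by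
  have hf : f ≠ 0 := by rintro rfl; have := i.pos; simp_all
  rw [Wcorr, Lagrange.nodalWeight, prod_inv_distrib]
  field_simp [leadingCoeff_ne_zero.mpr hf]

theorem eval_eq_leadingCoeff_mul_prod_add_sum_wcorr {K : Type*} [NormedField K] {n : ℕ}
    {f : K[X]} (hdeg : f.natDegree = n) {x : Fin n → K} (hx : Function.Injective x) (z : K) :
    f.eval z = f.leadingCoeff * ∏ j, (z - x j) +
      ∑ i, Wcorr f x i * f.leadingCoeff * ∏ j ∈ univ.erase i, (z - x j) := by
  conv_lhs =>
    rw [Lagrange.eq_C_leadingCoeff_mul_nodal_add_interpolate (f := f) (by simpa using hdeg) hx]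
  simp only [eval_add, eval_mul, eval_C, Lagrange.eval_nodal, Lagrange.interpolate_apply,
    eval_finsetSum, Lagrange.eval_basis, wcorr_mul_leadingCoeff hdeg, mul_assoc]

theorem root_vector_of_weierstrass_limit_general
    {K : Type*} [NormedField K] {n : ℕ}
    (f : Polynomial K) (hdeg : f.natDegree = n)
    (x : ℕ → Fin n → K) (hx : ∀ k : ℕ, Function.Injective (x k))
    (ξ : Fin n → K)
    (hconv : ∀ i : Fin n, Filter.Tendsto (fun k => x k i) Filter.atTop (nhds (ξ i)))
    (hW : ∀ i : Fin n,
      Filter.Tendsto (fun k => ‖Wcorr f (x k) i‖) Filter.atTop (nhds 0)) :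
    IsRootVector f ξ := by
  intro z
  set a := f.leadingCoeff
  have hprod (s : Finset (Fin n)) :
      Tendsto (fun k => ∏ j ∈ s, (z - x k j)) atTop (𝓝 (∏ j ∈ s, (z - ξ j))) :=
    tendsto_finsetProd s fun j _ => tendsto_const_nhds.sub (hconv j)
  have hlim : Tendsto (fun k => a * ∏ j, (z - x k j) +
        ∑ i, Wcorr f (x k) i * a * ∏ j ∈ univ.erase i, (z - x k j)) atTop
      (𝓝 (a * ∏ j, (z - ξ j) + ∑ i, 0 * a * ∏ j ∈ univ.erase i, (z - ξ j))) :=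
    ((hprod univ).const_mul a).add <| tendsto_finsetSum _ fun i _ =>
      ((tendsto_zero_iff_norm_tendsto_zero.mpr (hW i)).mul_const a).mul (hprod _)
  simp only [zero_mul, sum_const_zero, add_zero] at hlim
  exact tendsto_nhds_unique
    (tendsto_const_nhds.congr fun k => eval_eq_leadingCoeff_mul_prod_add_sum_wcorr hdeg (hx k) z)
    hlim

/-- basic existence theorem. If a sequence of vectors with pairwise
distinct components converges componentwise to `ξ` and the Weierstrass corrections
tend to zero componentwise, then `ξ` is a root-vector of `f`. -/
theorem root_vector_of_weierstrass_limit
    {K : Type*} [NormedField K] {n : ℕ} (hn : 2 ≤ n)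
    (f : Polynomial K) (hdeg : f.natDegree = n)
    (x : ℕ → Fin n → K) (hx : ∀ k : ℕ, Function.Injective (x k))
    (ξ : Fin n → K)
    (hconv : ∀ i : Fin n, Filter.Tendsto (fun k => x k i) Filter.atTop (nhds (ξ i)))
    (hW : ∀ i : Fin n,
      Filter.Tendsto (fun k => ‖Wcorr f (x k) i‖) Filter.atTop (nhds 0)) :
    IsRootVector f ξ :=
  root_vector_of_weierstrass_limit_general f hdeg x hx ξ hconv hW
end
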